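/- Let k ∈ {0,1,2} and let 1 ≤ p₁, p₂, p₃, p₄ ≤ ∞ satisfy 1/p₁ + 1/p₂ + 1/p₃ + 1/p₄ = 1 with at most one of p₁, …, p₄ equal to ∞. Then there is a constant C = C(p₁,p₂,p₃) > 0 such that for all measurable ψ₁, ψ₂, ψ₃ : (0,∞) → ℂ, ‖N_{3,k}(ψ₁,ψ₂,ψ₃)‖_{L^{p₄'}} ≤ C ‖ψ₁‖_{L^{p₁}} ‖ψ₂‖_{L^{p₂}} ‖ψ₃‖_{L^{p₃}}, where p₄' is the Hölder conjugate of p₄ (1/p₄' = 1 − 1/p₄). -/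

import Mathlib

/-!
Each `N_{3,k}(ψ₁,ψ₂,ψ₃)` is a real multiplier `m_k(ψ₁,ψ₂)` times `ψ₃`, so by Hölder it suffices to
bound `‖m_k‖_{L^q}` by `‖ψ₁ψ₂‖_{L^q}`, where `1/q = 1/p₁ + 1/p₂`; the restrictions on the exponents
give `1 < q < ∞`. For `k = 0` this is pointwise. For `k = 1, 2`, `|m_k|` is dominated by the Hardy
operator `g ↦ r⁻² ∫₀^r g(t) t dt`, resp. its adjoint `g ↦ ∫_r^∞ g(t) dt/t` for the measure `r dr`,
applied to `|ψ₁ψ₂|`. Both are bounded on `L^q(r dr)` for `q > 1`: Hölder on the inner integral,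
then Tonelli on the triangle `0 < t < r`.
-/

open MeasureTheory Set
open scoped ENNReal

/-- The measure `2π r dr` on `(0,∞)`. -/
noncomputable def rmeas : Measure ℝ :=
  (volume.restrict (Set.Ioi (0:ℝ))).withDensity (fun r => ENNReal.ofReal (2 * Real.pi * r))

/-- `Re(conj ψ₁ ψ₂)(r)`. -/
noncomputable def Re2 (ψ₁ ψ₂ : ℝ → ℂ) (r : ℝ) : ℝ := ((starRingEnd ℂ) (ψ₁ r) * ψ₂ r).re

/-- `A_θ[ψ₁,ψ₂](r) = -(1/2)∫₀^r Re(conj ψ₁ ψ₂)(r') r' dr'`. -/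
noncomputable def Atheta2 (ψ₁ ψ₂ : ℝ → ℂ) (r : ℝ) : ℝ :=
  -(1/2) * ∫ t in (0:ℝ)..r, Re2 ψ₁ ψ₂ t * t

/-- The cubic nonlinearities `N_{3,0}`, `N_{3,1}`, `N_{3,2}`. -/
noncomputable def N3 (k : ℕ) (ψ₁ ψ₂ ψ₃ : ℝ → ℂ) (r : ℝ) : ℂ :=
  match k with
  | 0 => -((Re2 ψ₁ ψ₂ r : ℝ) : ℂ) * ψ₃ r
  | 1 => ((2 / r ^ 2 * Atheta2 ψ₁ ψ₂ r : ℝ) : ℂ) * ψ₃ r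
  | _ => -(((∫ t in Set.Ioi r, Re2 ψ₁ ψ₂ t / t) : ℝ) : ℂ) * ψ₃ r

theorem ENNReal.lintegral_mul_rpow_le {α : Type*} [MeasurableSpace α] (μ : Measure α) {q : ℝ}
    (hq : 1 < q) {f g : α → ℝ≥0∞} (hf : AEMeasurable f μ) (hg : AEMeasurable g μ) :
    (∫⁻ x, f x * g x ∂μ) ^ q
      ≤ (∫⁻ x, f x ^ q ∂μ) * (∫⁻ x, g x ^ (q / (q - 1)) ∂μ) ^ (q - 1) := by
  have hq0 : 0 ≤ q := by linarith
  have hpq := Real.HolderConjugate.conjExponent hq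
  calc (∫⁻ x, f x * g x ∂μ) ^ q
      ≤ ((∫⁻ x, f x ^ q ∂μ) ^ (1 / q) * (∫⁻ x, g x ^ (q / (q - 1)) ∂μ) ^ (1 / (q / (q - 1)))) ^ q :=
        ENNReal.rpow_le_rpow (ENNReal.lintegral_mul_le_Lp_mul_Lq μ hpq hf hg) hq0
    _ = _ := by
        rw [ENNReal.mul_rpow_of_nonneg _ _ hq0, ← ENNReal.rpow_mul, ← ENNReal.rpow_mul,
          one_div_mul_cancel (by linarith), ENNReal.rpow_one]
        congr 2
        field_simp

theorem eLpNorm_mul_le_mul_eLpNorm {α 𝕜 : Type*} [MeasurableSpace α] {μ : Measure α} [NormedRing 𝕜]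
    {p q r : ℝ≥0∞} [ENNReal.HolderTriple p q r] {f g : α → 𝕜} (hf : AEStronglyMeasurable f μ)
    (hg : AEStronglyMeasurable g μ) : eLpNorm (f * g) r μ ≤ eLpNorm f p μ * eLpNorm g q μ := by
  simpa only [smul_eq_mul] using eLpNorm_smul_le_mul_eLpNorm (p := p) (q := q) (r := r) hg hf

theorem MeasureTheory.StronglyMeasurable.setIntegral_prodMk_preimage {α β E : Type*}
    [MeasurableSpace α] [MeasurableSpace β] {ν : Measure β} [SFinite ν] [NormedAddCommGroup E]
    [NormedSpace ℝ E]
    {f : β → E} (hf : StronglyMeasurable f) {s : Set (α × β)} (hs : MeasurableSet s) :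
    StronglyMeasurable fun a => ∫ b in Prod.mk a ⁻¹' s, f b ∂ν := by
  convert ((hf.comp_measurable measurable_snd).indicator hs).integral_prod_right' (ν := ν)
    using 2 with a
  rw [← integral_indicator (measurable_prodMk_left hs)]
  rfl

theorem lintegral_Ioi_lintegral_Ioo_comm {F : ℝ → ℝ → ℝ≥0∞}
    (hF : Measurable (Function.uncurry F)) (a : ℝ) :
    ∫⁻ r in Ioi a, ∫⁻ t in Ioo a r, F r t = ∫⁻ t in Ioi a, ∫⁻ r in Ioi t, F r t := by
  set S : Set (ℝ × ℝ) := {p | a < p.2 ∧ p.2 < p.1}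
  have hS : MeasurableSet S :=
    (measurableSet_lt measurable_const measurable_snd).inter
      (measurableSet_lt measurable_snd measurable_fst)
  calc _ = ∫⁻ r, ∫⁻ t, S.indicator (Function.uncurry F) (r, t) := by
        rw [← lintegral_indicator measurableSet_Ioi]
        congr 1 with r
        by_cases hr : r ∈ Ioi a
        · rw [indicator_of_mem hr, ← lintegral_indicator measurableSet_Ioo]
          rfl
        · rw [indicator_of_notMem hr]
          refine (lintegral_eq_zero_of_ae_eq_zero (.of_forall fun t => ?_)).symm
          exact indicator_of_notMem (fun h => hr (h.1.trans h.2)) _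
    _ = ∫⁻ t, ∫⁻ r, S.indicator (Function.uncurry F) (r, t) :=
        lintegral_lintegral_swap (hF.indicator hS).aemeasurable
    _ = _ := by
        rw [← lintegral_indicator measurableSet_Ioi]
        congr 1 with t
        by_cases ht : t ∈ Ioi a
        · rw [indicator_of_mem ht, ← lintegral_indicator measurableSet_Ioi]
          congr 1 with r
          simp [S, indicator, mem_Ioi.1 ht]
        · rw [indicator_of_notMem ht]
          exact lintegral_eq_zero_of_ae_eq_zero
            (.of_forall fun r => indicator_of_notMem (fun h => ht h.1) _)

theorem lintegral_Ioi_rpow_neg {q c : ℝ} (hq : 1 < q) (hc : 0 < c) :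
    ∫⁻ r in Ioi c, ENNReal.ofReal (r ^ (-q)) = ENNReal.ofReal (c ^ (1 - q) / (q - 1)) := by
  rw [← ofReal_integral_eq_lintegral_ofReal (integrableOn_Ioi_rpow_of_lt (by linarith) hc)
    (ae_restrict_of_forall_mem measurableSet_Ioi fun r hr => Real.rpow_nonneg (hc.trans hr).le _),
    integral_Ioi_rpow_of_lt (by linarith) hc]
  congr 1
  rw [← neg_div_neg_eq]
  ring_nf

-- In polar coordinates `hardyOp g r` is half the mean of the radial function `g` over the disc
-- of radius `r`; `dualHardyOp` is its adjoint for the measure `r dr`.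
noncomputable def hardyOp (g : ℝ → ℝ≥0∞) (r : ℝ) : ℝ≥0∞ :=
  ENNReal.ofReal (r ^ (-2 : ℝ)) * ∫⁻ t in Ioo 0 r, g t * ENNReal.ofReal t

noncomputable def dualHardyOp (g : ℝ → ℝ≥0∞) (r : ℝ) : ℝ≥0∞ :=
  ∫⁻ t in Ioi r, g t * ENNReal.ofReal t⁻¹

theorem hardyOp_rpow_mul_le {q : ℝ} (hq : 1 < q) {g : ℝ → ℝ≥0∞} (hg : Measurable g) {r : ℝ}
    (hr : 0 < r) :
    hardyOp g r ^ q * ENNReal.ofReal r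
      ≤ ENNReal.ofReal (r ^ (-q)) * ∫⁻ t in Ioo 0 r, (g t * ENNReal.ofReal t) ^ q := by
  have hq0 : 0 ≤ q := by linarith
  have holder := ENNReal.lintegral_mul_rpow_le (volume.restrict (Ioo 0 r)) hq
    (f := fun t => g t * ENNReal.ofReal t) (g := fun _ => 1)
    (hg.mul ENNReal.measurable_ofReal).aemeasurable aemeasurable_const
  simp only [mul_one, ENNReal.one_rpow, setLIntegral_const, one_mul, Real.volume_Ioo,
    sub_zero] at holder
  have hpow : ENNReal.ofReal (r ^ (-2 : ℝ)) ^ q * ENNReal.ofReal r ^ (q - 1) * ENNReal.ofReal r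
      = ENNReal.ofReal (r ^ (-q)) := by
    rw [ENNReal.ofReal_rpow_of_pos (by positivity), ENNReal.ofReal_rpow_of_pos hr,
      ← ENNReal.ofReal_mul (by positivity), ← ENNReal.ofReal_mul (by positivity),
      ← Real.rpow_mul hr.le, ← Real.rpow_add hr, ← Real.rpow_add_one hr.ne']
    ring_nf
  calc hardyOp g r ^ q * ENNReal.ofReal r
      = ENNReal.ofReal (r ^ (-2 : ℝ)) ^ q * (∫⁻ t in Ioo 0 r, g t * ENNReal.ofReal t) ^ q
          * ENNReal.ofReal r := by
        rw [hardyOp, ENNReal.mul_rpow_of_nonneg _ _ hq0]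
    _ ≤ ENNReal.ofReal (r ^ (-2 : ℝ)) ^ q
          * ((∫⁻ t in Ioo 0 r, (g t * ENNReal.ofReal t) ^ q) * ENNReal.ofReal r ^ (q - 1))
          * ENNReal.ofReal r := by
        gcongr
    _ = _ := by
        rw [← hpow]
        ring

theorem lintegral_hardyOp_rpow_le {q : ℝ} (hq : 1 < q) {g : ℝ → ℝ≥0∞} (hg : Measurable g) :
    ∫⁻ r in Ioi 0, hardyOp g r ^ q * ENNReal.ofReal r
      ≤ ENNReal.ofReal (1 / (q - 1)) * ∫⁻ t in Ioi 0, g t ^ q * ENNReal.ofReal t := by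
  have hq0 : 0 ≤ q := by linarith
  set G : ℝ → ℝ≥0∞ := fun t => (g t * ENNReal.ofReal t) ^ q
  have hG : Measurable G := (hg.mul ENNReal.measurable_ofReal).pow_const q
  calc ∫⁻ r in Ioi 0, hardyOp g r ^ q * ENNReal.ofReal r
      ≤ ∫⁻ r in Ioi 0, ENNReal.ofReal (r ^ (-q)) * ∫⁻ t in Ioo 0 r, G t :=
        setLIntegral_mono' measurableSet_Ioi fun r hr => hardyOp_rpow_mul_le hq hg hr
    _ = ∫⁻ r in Ioi 0, ∫⁻ t in Ioo 0 r, ENNReal.ofReal (r ^ (-q)) * G t := by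
        simp_rw [lintegral_const_mul _ hG]
    _ = ∫⁻ t in Ioi 0, ∫⁻ r in Ioi t, ENNReal.ofReal (r ^ (-q)) * G t :=
        lintegral_Ioi_lintegral_Ioo_comm (by fun_prop) 0
    _ = ∫⁻ t in Ioi 0, ENNReal.ofReal (1 / (q - 1)) * (g t ^ q * ENNReal.ofReal t) := by
        refine setLIntegral_congr_fun measurableSet_Ioi fun t ht => ?_
        have ht : 0 < t := ht
        rw [lintegral_mul_const _ (by fun_prop), lintegral_Ioi_rpow_neg hq ht]
        simp only [G]
        rw [ENNReal.mul_rpow_of_nonneg _ _ hq0, ENNReal.ofReal_rpow_of_pos ht]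
        have hpow : t ^ (1 - q) / (q - 1) * t ^ q = 1 / (q - 1) * t := by
          rw [div_mul_eq_mul_div, ← Real.rpow_add ht]
          simp [div_eq_inv_mul]
        rw [mul_left_comm, ← ENNReal.ofReal_mul (by positivity), hpow,
          ENNReal.ofReal_mul (by positivity)]
        ring
    _ = _ := lintegral_const_mul _ ((hg.pow_const q).mul ENNReal.measurable_ofReal)

-- Hölder against the weight `1/t`: `(∫_r^∞ t^(-q/(q-1)) dt)^(q-1) = (q-1)^(q-1) / r` exactly
-- absorbs the factor `r`.
theorem dualHardyOp_rpow_mul_le {q : ℝ} (hq : 1 < q) {g : ℝ → ℝ≥0∞} (hg : Measurable g) {r : ℝ}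
    (hr : 0 < r) :
    dualHardyOp g r ^ q * ENNReal.ofReal r
      ≤ ENNReal.ofReal ((q - 1) ^ (q - 1)) * ∫⁻ t in Ioi r, g t ^ q := by
  have hq1 : 0 < q - 1 := by linarith
  have hconj : q / (q - 1) - 1 = (q - 1)⁻¹ := by field_simp; ring
  have holder := ENNReal.lintegral_mul_rpow_le (volume.restrict (Ioi r)) hq
    (f := g) (g := fun t => ENNReal.ofReal t⁻¹) hg.aemeasurable (by fun_prop)
  have hweight : ∫⁻ t in Ioi r, ENNReal.ofReal t⁻¹ ^ (q / (q - 1))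
      = ENNReal.ofReal (r ^ (1 - q / (q - 1)) * (q - 1)) := by
    rw [← div_inv_eq_mul, ← hconj, ← lintegral_Ioi_rpow_neg (by rw [lt_div_iff₀ hq1]; linarith) hr]
    refine setLIntegral_congr_fun measurableSet_Ioi fun t ht => ?_
    have ht : 0 < t := hr.trans ht
    rw [ENNReal.ofReal_rpow_of_pos (inv_pos.2 ht), Real.inv_rpow ht.le, Real.rpow_neg ht.le]
  have hpow : (r ^ (1 - q / (q - 1)) * (q - 1)) ^ (q - 1) * r = (q - 1) ^ (q - 1) := by
    have hexp : (1 - q / (q - 1)) * (q - 1) = -1 := by field_simp; ring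
    rw [Real.mul_rpow (by positivity) hq1.le, ← Real.rpow_mul hr.le, hexp, Real.rpow_neg_one,
      mul_right_comm, inv_mul_cancel₀ hr.ne', one_mul]
  calc dualHardyOp g r ^ q * ENNReal.ofReal r
      ≤ (∫⁻ t in Ioi r, g t ^ q) * ENNReal.ofReal (r ^ (1 - q / (q - 1)) * (q - 1)) ^ (q - 1)
          * ENNReal.ofReal r := by
        rw [← hweight]
        gcongr
        exact holder
    _ = _ := by
        rw [ENNReal.ofReal_rpow_of_nonneg (by positivity) hq1.le, mul_assoc,
          ← ENNReal.ofReal_mul (by positivity), hpow, mul_comm]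

theorem lintegral_dualHardyOp_rpow_le {q : ℝ} (hq : 1 < q) {g : ℝ → ℝ≥0∞} (hg : Measurable g) :
    ∫⁻ r in Ioi 0, dualHardyOp g r ^ q * ENNReal.ofReal r
      ≤ ENNReal.ofReal ((q - 1) ^ (q - 1)) * ∫⁻ t in Ioi 0, g t ^ q * ENNReal.ofReal t := by
  calc ∫⁻ r in Ioi 0, dualHardyOp g r ^ q * ENNReal.ofReal r
      ≤ ∫⁻ r in Ioi 0, ENNReal.ofReal ((q - 1) ^ (q - 1)) * ∫⁻ t in Ioi r, g t ^ q :=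
        setLIntegral_mono' measurableSet_Ioi fun r hr => dualHardyOp_rpow_mul_le hq hg hr
    _ = ENNReal.ofReal ((q - 1) ^ (q - 1)) * ∫⁻ t in Ioi 0, ∫⁻ r in Ioo 0 t, g t ^ q := by
        rw [lintegral_const_mul' _ _ ENNReal.ofReal_ne_top,
          lintegral_Ioi_lintegral_Ioo_comm (F := fun t _ => g t ^ q) (by fun_prop)]
    _ = _ := by
        simp only [setLIntegral_const, Real.volume_Ioo, sub_zero]

theorem lintegral_rmeas (g : ℝ → ℝ≥0∞) :
    ∫⁻ r, g r ∂rmeas = ENNReal.ofReal (2 * Real.pi) * ∫⁻ r in Ioi 0, g r * ENNReal.ofReal r := by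
  rw [rmeas, lintegral_withDensity_eq_lintegral_mul_non_measurable₀ _ (by fun_prop)
    (.of_forall fun _ => ENNReal.ofReal_lt_top), ← lintegral_const_mul' _ _ ENNReal.ofReal_ne_top]
  refine lintegral_congr fun r => ?_
  rw [Pi.mul_apply, ENNReal.ofReal_mul Real.two_pi_pos.le]
  ring

theorem ae_rmeas_of_forall_pos {P : ℝ → Prop} (hP : ∀ r, 0 < r → P r) : ∀ᵐ r ∂rmeas, P r :=
  (withDensity_absolutelyContinuous _ _).ae_le (ae_restrict_of_forall_mem measurableSet_Ioi hP)

theorem eLpNorm_rmeas_le_of_lintegral_le {p : ℝ≥0∞} (hp0 : p ≠ 0) (hp : p ≠ ∞)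
    {f g : ℝ → ℝ≥0∞} {C : ℝ} (hC : 0 ≤ C)
    (h : ∫⁻ r in Ioi 0, f r ^ p.toReal * ENNReal.ofReal r
      ≤ ENNReal.ofReal C * ∫⁻ r in Ioi 0, g r ^ p.toReal * ENNReal.ofReal r) :
    eLpNorm f p rmeas ≤ ENNReal.ofReal (C ^ (1 / p.toReal)) * eLpNorm g p rmeas := by
  simp only [eLpNorm_eq_lintegral_rpow_enorm_toReal hp0 hp, enorm_eq_self, lintegral_rmeas]
  rw [← ENNReal.ofReal_rpow_of_nonneg hC (by positivity),
    ← ENNReal.mul_rpow_of_nonneg _ _ (by positivity)]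
  refine ENNReal.rpow_le_rpow ?_ (by positivity)
  calc _ ≤ ENNReal.ofReal (2 * Real.pi)
        * (ENNReal.ofReal C * ∫⁻ r in Ioi 0, g r ^ p.toReal * ENNReal.ofReal r) := by gcongr
    _ = _ := by ring

noncomputable def N3coeff (k : ℕ) (ψ₁ ψ₂ : ℝ → ℂ) (r : ℝ) : ℝ :=
  match k with
  | 0 => -Re2 ψ₁ ψ₂ r
  | 1 => 2 / r ^ 2 * Atheta2 ψ₁ ψ₂ r
  | _ => -∫ t in Ioi r, Re2 ψ₁ ψ₂ t / t

theorem N3_eq_N3coeff_smul (k : ℕ) (ψ₁ ψ₂ ψ₃ : ℝ → ℂ) :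
    N3 k ψ₁ ψ₂ ψ₃ = N3coeff k ψ₁ ψ₂ • ψ₃ := by
  funext r
  rcases k with _ | _ | k <;> simp [N3, N3coeff, Complex.real_smul]

section N3coeff

variable {ψ₁ ψ₂ : ℝ → ℂ}

theorem measurable_Re2 (h₁ : Measurable ψ₁) (h₂ : Measurable ψ₂) : Measurable (Re2 ψ₁ ψ₂) :=
  Complex.measurable_re.comp ((Complex.continuous_conj.measurable.comp h₁).mul h₂)

theorem measurable_N3coeff (k : ℕ) (h₁ : Measurable ψ₁) (h₂ : Measurable ψ₂) :
    Measurable (N3coeff k ψ₁ ψ₂) := by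
  have hRe := (measurable_Re2 h₁ h₂).stronglyMeasurable
  rcases k with _ | _ | k
  · exact (measurable_Re2 h₁ h₂).neg
  · -- `∫ t in 0..r` unfolds to `∫ t in Ioc 0 r` minus `∫ t in Ioc r 0`: sections of the sets below.
    have hIoc (s : Set (ℝ × ℝ)) (hs : MeasurableSet s) :=
      (hRe.mul stronglyMeasurable_id).setIntegral_prodMk_preimage (ν := volume) hs |>.measurable
    have hA : Measurable (Atheta2 ψ₁ ψ₂) :=
      measurable_const.mul <| (hIoc {p | 0 < p.2 ∧ p.2 ≤ p.1} (by measurability)).sub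
        (hIoc {p | p.1 < p.2 ∧ p.2 ≤ 0} (by measurability))
    exact (measurable_const.div (measurable_id.pow_const 2)).mul hA
  · exact ((hRe.div stronglyMeasurable_id).setIntegral_prodMk_preimage (ν := volume)
      (s := {p : ℝ × ℝ | p.1 < p.2}) (by measurability)).measurable.neg

theorem enorm_Re2_le (r : ℝ) : ‖Re2 ψ₁ ψ₂ r‖ₑ ≤ ‖ψ₁ r * ψ₂ r‖ₑ := by
  rw [Re2, Real.enorm_eq_ofReal_abs, ← ofReal_norm]
  exact ENNReal.ofReal_le_ofReal ((Complex.abs_re_le_norm _).trans (by simp))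

theorem enorm_N3coeff_one_le {r : ℝ} (hr : 0 < r) :
    ‖N3coeff 1 ψ₁ ψ₂ r‖ₑ ≤ hardyOp (fun t => ‖ψ₁ t * ψ₂ t‖ₑ) r := by
  have hcoeff : N3coeff 1 ψ₁ ψ₂ r = -(r ^ (-2 : ℝ) * ∫ t in Ioo 0 r, Re2 ψ₁ ψ₂ t * t) := by
    rw [N3coeff, Atheta2, intervalIntegral.integral_of_le hr.le, integral_Ioc_eq_integral_Ioo,
      Real.rpow_neg hr.le, Real.rpow_two]
    ring
  rw [hcoeff, enorm_neg, enorm_mul, Real.enorm_of_nonneg (by positivity), hardyOp]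
  gcongr
  refine (enorm_integral_le_lintegral_enorm _).trans
    (setLIntegral_mono' measurableSet_Ioo fun t ht => ?_)
  rw [enorm_mul, Real.enorm_of_nonneg ht.1.le]
  gcongr
  exact enorm_Re2_le t

theorem enorm_N3coeff_add_two_le (k : ℕ) {r : ℝ} (hr : 0 < r) :
    ‖N3coeff (k + 2) ψ₁ ψ₂ r‖ₑ ≤ dualHardyOp (fun t => ‖ψ₁ t * ψ₂ t‖ₑ) r := by
  change ‖-∫ t in Ioi r, Re2 ψ₁ ψ₂ t / t‖ₑ ≤ _
  rw [enorm_neg]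
  refine (enorm_integral_le_lintegral_enorm _).trans
    (setLIntegral_mono' measurableSet_Ioi fun t ht => ?_)
  rw [div_eq_mul_inv, enorm_mul, Real.enorm_of_nonneg (inv_nonneg.2 (hr.trans ht).le)]
  gcongr
  exact enorm_Re2_le t

end N3coeff

theorem exists_eLpNorm_N3coeff_le (k : ℕ) {q : ℝ≥0∞} (hq : 1 < q) (hq' : q ≠ ∞) :
    ∃ C : ℝ, 0 < C ∧ ∀ ψ₁ ψ₂ : ℝ → ℂ, Measurable ψ₁ → Measurable ψ₂ →
      eLpNorm (N3coeff k ψ₁ ψ₂) q rmeas ≤ ENNReal.ofReal C * eLpNorm (ψ₁ * ψ₂) q rmeas := by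
  have hq0 : q ≠ 0 := (zero_lt_one.trans hq).ne'
  have hqr : 1 < q.toReal := by
    simpa using (ENNReal.toReal_lt_toReal ENNReal.one_ne_top hq').2 hq
  rcases k with _ | _ | k
  · refine ⟨1, one_pos, fun ψ₁ ψ₂ _ _ => ?_⟩
    rw [ENNReal.ofReal_one, one_mul]
    exact eLpNorm_mono_enorm fun r => (enorm_neg _).trans_le (enorm_Re2_le r)
  · refine ⟨(1 / (q.toReal - 1)) ^ (1 / q.toReal), by positivity,
      fun ψ₁ ψ₂ h₁ h₂ => ?_⟩
    calc eLpNorm (N3coeff 1 ψ₁ ψ₂) q rmeas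
        ≤ eLpNorm (hardyOp fun t => ‖ψ₁ t * ψ₂ t‖ₑ) q rmeas :=
          eLpNorm_mono_enorm_ae (ae_rmeas_of_forall_pos fun r hr => enorm_N3coeff_one_le hr)
      _ ≤ _ := eLpNorm_rmeas_le_of_lintegral_le hq0 hq' (by positivity)
          (lintegral_hardyOp_rpow_le hqr (by fun_prop))
      _ = _ := by rw [eLpNorm_enorm]; rfl
  · refine ⟨((q.toReal - 1) ^ (q.toReal - 1)) ^ (1 / q.toReal), by positivity,
      fun ψ₁ ψ₂ h₁ h₂ => ?_⟩
    calc eLpNorm (N3coeff (k + 2) ψ₁ ψ₂) q rmeas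
        ≤ eLpNorm (dualHardyOp fun t => ‖ψ₁ t * ψ₂ t‖ₑ) q rmeas :=
          eLpNorm_mono_enorm_ae (ae_rmeas_of_forall_pos fun r hr => enorm_N3coeff_add_two_le k hr)
      _ ≤ _ := eLpNorm_rmeas_le_of_lintegral_le hq0 hq' (by positivity)
          (lintegral_dualHardyOp_rpow_le hqr (by fun_prop))
      _ = _ := by rw [eLpNorm_enorm]; rfl

theorem exists_holderTriple_of_inv_add_eq_one {p₁ p₂ p₃ p₄ p₄' : ℝ≥0∞}
    (hsum : 1 / p₁ + 1 / p₂ + 1 / p₃ + 1 / p₄ = 1) (h₁₂ : p₁ = ∞ → p₂ ≠ ∞)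
    (h₃₄ : p₃ = ∞ → p₄ ≠ ∞) (hconj : 1 / p₄ + 1 / p₄' = 1) :
    ∃ q, 1 < q ∧ q ≠ ∞ ∧ ENNReal.HolderTriple p₁ p₂ q ∧ ENNReal.HolderTriple q p₃ p₄' := by
  simp only [one_div] at hsum hconj
  have ha : p₁⁻¹ + p₂⁻¹ ≠ 0 := by simpa using h₁₂
  have hb : p₃⁻¹ + p₄⁻¹ ≠ 0 := by simpa using h₃₄
  have hsum' : (p₁⁻¹ + p₂⁻¹) + (p₃⁻¹ + p₄⁻¹) = 1 := by rw [← hsum]; ring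
  have ha1 : p₁⁻¹ + p₂⁻¹ < 1 := hsum' ▸ ENNReal.lt_add_right
    (ne_top_of_le_ne_top ENNReal.one_ne_top (hsum' ▸ le_self_add)) hb
  refine ⟨(p₁⁻¹ + p₂⁻¹)⁻¹, ENNReal.one_lt_inv.2 ha1, ENNReal.inv_ne_top.2 ha,
    ⟨(inv_inv _).symm⟩, ⟨?_⟩⟩
  have h₄ : p₄⁻¹ ≠ ∞ := ne_top_of_le_ne_top ENNReal.one_ne_top (hconj ▸ le_self_add)
  refine (ENNReal.add_right_inj h₄).1 ?_
  rw [inv_inv, hconj, ← hsum]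
  ring

theorem nonlinear_estimates_holder_cubic_general (k : ℕ)
    (p₁ p₂ p₃ p₄ p₄' : ℝ≥0∞)
    (hsum : 1 / p₁ + 1 / p₂ + 1 / p₃ + 1 / p₄ = 1)
    (hinf₁ : p₁ = ∞ → p₂ ≠ ∞ ∧ p₃ ≠ ∞ ∧ p₄ ≠ ∞)
    (hinf₃ : p₃ = ∞ → p₄ ≠ ∞)
    (hconj : 1 / p₄ + 1 / p₄' = 1) :
    ∃ C : ℝ, 0 < C ∧ ∀ ψ₁ ψ₂ ψ₃ : ℝ → ℂ,
      Measurable ψ₁ → Measurable ψ₂ → Measurable ψ₃ →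
      eLpNorm (N3 k ψ₁ ψ₂ ψ₃) p₄' rmeas ≤
        ENNReal.ofReal C * eLpNorm ψ₁ p₁ rmeas * eLpNorm ψ₂ p₂ rmeas *
          eLpNorm ψ₃ p₃ rmeas := by
  obtain ⟨q, hq, hq', h₁₂, h₃₄⟩ :=
    exists_holderTriple_of_inv_add_eq_one hsum (fun h => (hinf₁ h).1) hinf₃ hconj
  obtain ⟨C, hC, hcoeff⟩ := exists_eLpNorm_N3coeff_le k hq hq'
  refine ⟨C, hC, fun ψ₁ ψ₂ ψ₃ h₁ h₂ h₃ => ?_⟩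
  calc eLpNorm (N3 k ψ₁ ψ₂ ψ₃) p₄' rmeas
      ≤ eLpNorm (N3coeff k ψ₁ ψ₂) q rmeas * eLpNorm ψ₃ p₃ rmeas := by
        rw [N3_eq_N3coeff_smul]
        exact eLpNorm_smul_le_mul_eLpNorm h₃.aestronglyMeasurable
          (measurable_N3coeff k h₁ h₂).aestronglyMeasurable
    _ ≤ ENNReal.ofReal C * eLpNorm (ψ₁ * ψ₂) q rmeas * eLpNorm ψ₃ p₃ rmeas := by
        gcongr
        exact hcoeff ψ₁ ψ₂ h₁ h₂
    _ ≤ ENNReal.ofReal C * (eLpNorm ψ₁ p₁ rmeas * eLpNorm ψ₂ p₂ rmeas) * eLpNorm ψ₃ p₃ rmeas := by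
        gcongr
        exact eLpNorm_mul_le_mul_eLpNorm h₁.aestronglyMeasurable h₂.aestronglyMeasurable
    _ = _ := by ring

/-- Nonlinear estimates (Hölder-type) for the cubic nonlinearities `N_{3,k}`, `k ∈ {0,1,2}`. -/
theorem nonlinear_estimates_holder_cubic (k : ℕ) (hk : k ≤ 2)
    (p₁ p₂ p₃ p₄ p₄' : ℝ≥0∞)
    (hp₁ : 1 ≤ p₁) (hp₂ : 1 ≤ p₂) (hp₃ : 1 ≤ p₃) (hp₄ : 1 ≤ p₄)
    (hsum : 1 / p₁ + 1 / p₂ + 1 / p₃ + 1 / p₄ = 1)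
    (hinf₁ : p₁ = ∞ → p₂ ≠ ∞ ∧ p₃ ≠ ∞ ∧ p₄ ≠ ∞)
    (hinf₂ : p₂ = ∞ → p₃ ≠ ∞ ∧ p₄ ≠ ∞)
    (hinf₃ : p₃ = ∞ → p₄ ≠ ∞)
    (hconj : 1 / p₄ + 1 / p₄' = 1) :
    ∃ C : ℝ, 0 < C ∧ ∀ ψ₁ ψ₂ ψ₃ : ℝ → ℂ,
      Measurable ψ₁ → Measurable ψ₂ → Measurable ψ₃ →
      eLpNorm (N3 k ψ₁ ψ₂ ψ₃) p₄' rmeas ≤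
        ENNReal.ofReal C * eLpNorm ψ₁ p₁ rmeas * eLpNorm ψ₂ p₂ rmeas *
          eLpNorm ψ₃ p₃ rmeas :=
  nonlinear_estimates_holder_cubic_general k p₁ p₂ p₃ p₄ p₄' hsum hinf₁ hinf₃ hconj
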